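/- arXiv:math/0411295 — 10 statements merged into one kernel-verified Lean document; each statement's English description precedes it below -/
import Mathlib

section
/- Let φ(d,e,n) := C(d+n, n) − C(d−2e+n, n) − (n+1)·C(e+n, n) + (n+1), regarded as an integer. Then for all integers d, e, n with d ≥ 2e, e ≥ 3 and n ≥ 3, one has φ(d,e,n) ≥ 0. -/
/-- φ(d,e,n) = C(d+n,n) − C(d−2e+n,n) − (n+1)·C(e+n,n) + (n+1), as an integer. -/
def phi (d e n : ℕ) : ℤ :=
  ((d + n).choose n : ℤ) - ((d - 2 * e + n).choose n : ℤ)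
    - (n + 1) * ((e + n).choose n : ℤ) + (n + 1)

/-!
Put `m = d - 2e`. By Pascal's rule, `C(b + m, n) - C(a + m, n)` is nondecreasing in `m`
when `a ≤ b`, so `C(d + n, n) - C(m + n, n) ≥ C(2e + n, n) - 1`. It then suffices that
`(n + 1) C(e + n, n) ≤ C(2e + n, n)`: the ratio `C(2e + n, n) / C(e + n, n)` gains the factor
`(2e + n + 1) / (e + n + 1) ≥ (n + 2) / (n + 1)` when `n` increases, and it exceeds `4`
at `n = 3` as soon as `e ≥ 3`.
-/

namespace Nat

theorem choose_add_add_choose_le {a b : ℕ} (hab : a ≤ b) (m n : ℕ) :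
    (a + m).choose n + b.choose n ≤ (b + m).choose n + a.choose n := by
  induction m generalizing n with
  | zero => exact (add_comm _ _).le
  | succ m ih =>
    cases n with
    | zero => simp
    | succ n =>
      rw [← add_assoc, ← add_assoc, choose_succ_succ', choose_succ_succ']
      have hn := ih n
      have hsucc := ih (n + 1)
      have hmono : (a + m).choose n ≤ (b + m).choose n := choose_le_choose n (by omega)
      omega

theorem four_mul_choose_add_three_le (e : ℕ) (he : 3 ≤ e) :
    4 * (e + 3).choose 3 ≤ (2 * e + 3).choose 3 := by
  have hdesc (x : ℕ) : 6 * x.choose 3 = x * (x - 1) * (x - 2) := by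
    rw [show 6 = (3 : ℕ)! from rfl, ← descFactorial_eq_factorial_mul_choose]
    simp [descFactorial_succ, mul_comm]
  have hsmall := hdesc (e + 3)
  have hlarge := hdesc (2 * e + 3)
  simp only [show e + 3 - 1 = e + 2 by omega, show e + 3 - 2 = e + 1 by omega,
    show 2 * e + 3 - 1 = 2 * e + 2 by omega, show 2 * e + 3 - 2 = 2 * e + 1 by omega]
    at hsmall hlarge
  nlinarith

theorem succ_mul_choose_add_le_choose_two_mul_add {e n : ℕ} (he : 3 ≤ e) (hn : 3 ≤ n) :
    (n + 1) * (e + n).choose n ≤ (2 * e + n).choose n := by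
  induction n, hn using le_induction with
  | base => exact four_mul_choose_add_three_le e he
  | succ n hn ih =>
    have hsmall := add_one_mul_choose_eq (e + n) n
    have hlarge := add_one_mul_choose_eq (2 * e + n) n
    have hratio : (n + 2) * (e + n + 1) ≤ (2 * e + n + 1) * (n + 1) := by nlinarith
    refine le_of_mul_le_mul_right (a := n + 1) ?_ (succ_pos n)
    calc (n + 1 + 1) * (e + (n + 1)).choose (n + 1) * (n + 1)
        = (n + 2) * (e + n + 1) * (e + n).choose n := by
          rw [← add_assoc, mul_assoc, ← hsmall]; ring
      _ ≤ (2 * e + n + 1) * ((n + 1) * (e + n).choose n) := by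
        rw [← mul_assoc]; exact Nat.mul_le_mul_right _ hratio
      _ ≤ (2 * e + n + 1) * (2 * e + n).choose n := Nat.mul_le_mul_left _ ih
      _ = (2 * e + (n + 1)).choose (n + 1) * (n + 1) := by rw [hlarge, add_assoc]

end Nat

theorem stmt_0 (d e n : ℕ) (hd : 2 * e ≤ d) (he : 3 ≤ e) (hn : 3 ≤ n) :
    0 ≤ phi d e n := by
  obtain ⟨m, rfl⟩ : ∃ m, d = 2 * e + m := ⟨d - 2 * e, by omega⟩
  have hmono := Nat.choose_add_add_choose_le (show n ≤ 2 * e + n by omega) m n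
  have hbase := Nat.succ_mul_choose_add_le_choose_two_mul_add he hn
  rw [Nat.choose_self, add_comm n m, add_right_comm] at hmono
  unfold phi
  rw [Nat.add_sub_cancel_left]
  linarith
end

section
/- Fix an integer n ≥ 1 and for each integer e ≥ 1 define the rational number A(e) := (∏_{i=1}^{e} (n+e+i)) / (∏_{i=1}^{e} (e+i)) − (n+1). Then A(e+1) > A(e) for every integer e ≥ 1. -/
/-!
Write `P_c(e) = ∏_{e < j ≤ 2e} (c + j)`, so that `A(e) = P_n(e) / P_0(e) - (n + 1)`.
Passing from `e` to `e + 1` removes the factor `c + e + 1` and adds `c + 2e + 1` and `c + 2e + 2`,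
so the ratio `P_n / P_0` gets multiplied by
`(e + 1)(n + 2e + 1)(n + 2e + 2) / ((n + e + 1)(2e + 1)(2e + 2))`,
which exceeds `1` since numerator minus denominator is `n (n + 1) (e + 1)`.
-/

open Finset

/-- A(e) = (∏_{i=1}^{e} (n+e+i)) / (∏_{i=1}^{e} (e+i)) − (n+1), as a rational number. -/
def A (n e : ℕ) : ℚ :=
  (∏ i ∈ Finset.Icc 1 e, ((n : ℚ) + e + i)) / (∏ i ∈ Finset.Icc 1 e, ((e : ℚ) + i))
    - (n + 1)

section CommSemiring

variable {R : Type*} [CommSemiring R]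

def upperHalfProd (c : R) (e : ℕ) : R := ∏ j ∈ Ioc e (2 * e), (c + j)

lemma prod_Icc_one_eq_upperHalfProd (c : R) (e : ℕ) :
    ∏ i ∈ Icc 1 e, (c + e + i) = upperHalfProd c e := by
  have hshift : Ioc e (2 * e) = (Ioc 0 e).map (addRightEmbedding e) := by
    rw [map_add_right_Ioc, zero_add, two_mul]
  rw [upperHalfProd, hshift, prod_map, ← Icc_add_one_left_eq_Ioc, zero_add]
  refine prod_congr rfl fun i _ => ?_
  rw [addRightEmbedding_apply]
  push_cast
  ring

lemma upperHalfProd_succ_mul (c : R) (e : ℕ) :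
    upperHalfProd c (e + 1) * (c + (e + 1)) =
      upperHalfProd c e * ((c + (2 * e + 1)) * (c + (2 * e + 2))) := by
  calc upperHalfProd c (e + 1) * (c + (e + 1))
      = (c + ((e + 1 : ℕ) : R)) * ∏ j ∈ Ioc (e + 1) (2 * e + 1 + 1), (c + (j : R)) := by
        rw [upperHalfProd, mul_comm]; push_cast; rfl
    _ = ∏ j ∈ Ioc e (2 * e + 1 + 1), (c + (j : R)) := by
        rw [← prod_Ioc_consecutive _ (Nat.le_succ e) (by omega), Nat.Ioc_succ_singleton,
          prod_singleton]
    _ = (∏ j ∈ Ioc e (2 * e), (c + (j : R))) *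
          ((c + ((2 * e + 1 : ℕ) : R)) * (c + ((2 * e + 1 + 1 : ℕ) : R))) := by
        rw [prod_Ioc_succ_top (by omega), prod_Ioc_succ_top (by omega), mul_assoc]
    _ = _ := by rw [upperHalfProd]; push_cast; ring

end CommSemiring

section LinearOrderedField

variable {K : Type*} [Field K] [LinearOrder K] [IsStrictOrderedRing K]

lemma upperHalfProd_pos {c : K} (hc : 0 ≤ c) (e : ℕ) : 0 < upperHalfProd c e :=
  prod_pos fun j hj => by
    have : (0 : K) < j := by exact_mod_cast (Nat.zero_le e).trans_lt (mem_Ioc.1 hj).1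
    positivity

lemma upperHalfProd_div_lt_succ {c : K} (hc : 0 < c) (e : ℕ) :
    upperHalfProd c e / upperHalfProd 0 e <
      upperHalfProd c (e + 1) / upperHalfProd 0 (e + 1) := by
  set P := upperHalfProd c e
  set Q := upperHalfProd (0 : K) e
  have hQ_succ := upperHalfProd_succ_mul (0 : K) e
  simp only [zero_add] at hQ_succ
  have key : (c + (e + 1)) * (e + 1) *
      (upperHalfProd c (e + 1) * Q - P * upperHalfProd 0 (e + 1)) =
      P * Q * (c * (c + 1) * (e + 1)) := by
    linear_combination (Q * (e + 1)) * upperHalfProd_succ_mul c e - (P * (c + (e + 1))) * hQ_succ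
  have hP : 0 < P := upperHalfProd_pos hc.le e
  have hQ : 0 < Q := upperHalfProd_pos le_rfl e
  rw [div_lt_div_iff₀ hQ (upperHalfProd_pos le_rfl _), ← sub_pos]
  refine pos_of_mul_pos_right (a := (c + (e + 1)) * (e + 1)) ?_ (by positivity)
  rw [key]
  positivity

end LinearOrderedField

theorem stmt_1_general (n : ℕ) (hn : 1 ≤ n) (e : ℕ) :
    A n e < A n (e + 1) := by
  have hA (e : ℕ) : A n e = upperHalfProd (n : ℚ) e / upperHalfProd 0 e - (n + 1) := by
    rw [A, prod_Icc_one_eq_upperHalfProd, ← prod_Icc_one_eq_upperHalfProd (0 : ℚ), zero_add]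
  rw [hA, hA, sub_lt_sub_iff_right]
  exact upperHalfProd_div_lt_succ (by exact_mod_cast hn) e

theorem stmt_1 (n : ℕ) (hn : 1 ≤ n) (e : ℕ) (he : 1 ≤ e) :
    A n e < A n (e + 1) :=
  stmt_1_general n hn e
end

section
/- Let φ(d,e,n) := C(d+n, n) − C(d−2e+n, n) − (n+1)·C(e+n, n) + (n+1), regarded as an integer. Then for all integers d ≥ 3 and n ≥ 2, one has φ(d,1,n) > 0. -/
lemma base_aux (n : ℕ) (hn : 2 ≤ n) : (n + 1) * (n + 1) < (n + 3).choose n := by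
  induction n with
  | zero => omega
  | succ m ih =>
    rcases Nat.lt_or_ge m 2 with hm | hm
    · interval_cases m <;> first | (exfalso; omega) | decide
    · have IH := ih hm
      have h1 : (m + 4).choose (m + 1) = (m + 3).choose m + (m + 3).choose (m + 1) :=
        Nat.choose_succ_succ' (m + 3) m
      have h2 : (m + 3).choose (m + 1) = (m + 3).choose 2 := by
        rw [← Nat.choose_symm (by omega)]
        congr 1
        omega
      have h3 : (m + 3).choose 2 = (m + 2).choose 1 + (m + 2).choose 2 :=
        Nat.choose_succ_succ (m + 2) 1
      have h4 : (m + 2).choose 2 = (m + 1).choose 1 + (m + 1).choose 2 :=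
        Nat.choose_succ_succ (m + 1) 1
      have h5 : (m + 2).choose 1 = m + 2 := Nat.choose_one_right _
      have h6 : (m + 1).choose 1 = m + 1 := Nat.choose_one_right _
      -- so (m+3).choose (m+1) ≥ 2m+3
      nlinarith [Nat.zero_le ((m + 1).choose 2)]

lemma key (n : ℕ) (hn : 2 ≤ n) : ∀ d, 3 ≤ d →
    (d - 2 + n).choose n + n * (n + 1) < (d + n).choose n := by
  intro d
  induction d with
  | zero => omega
  | succ m ih =>
    intro hm
    rcases Nat.lt_or_ge m 3 with h3 | h3
    · -- m + 1 = 3, so m = 2 : base case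
      have hm2 : m = 2 := by omega
      subst hm2
      have : (3 - 2 + n).choose n = n + 1 := by
        rw [show 3 - 2 + n = n + 1 by omega, Nat.choose_succ_self_right]
      rw [this, show (3 + n) = n + 3 by omega]
      have := base_aux n hn
      nlinarith
    · have IH := ih h3
      obtain ⟨k, rfl⟩ : ∃ k, n = k + 1 := ⟨n - 1, by omega⟩
      have hA : (m + 1 + (k + 1)).choose (k + 1)
          = (m + (k + 1)).choose k + (m + (k + 1)).choose (k + 1) := by
        rw [show m + 1 + (k + 1) = (m + (k + 1)) + 1 by omega]
        exact Nat.choose_succ_succ' (m + (k + 1)) k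
      have hB : (m + 1 - 2 + (k + 1)).choose (k + 1)
          = (m - 2 + (k + 1)).choose k + (m - 2 + (k + 1)).choose (k + 1) := by
        rw [show m + 1 - 2 + (k + 1) = (m - 2 + (k + 1)) + 1 by omega]
        exact Nat.choose_succ_succ' (m - 2 + (k + 1)) k
      have hC : (m - 2 + (k + 1)).choose k ≤ (m + (k + 1)).choose k :=
        Nat.choose_le_choose _ (by omega)
      omega

theorem stmt_3 (d n : ℕ) (hd : 3 ≤ d) (hn : 2 ≤ n) : 0 < phi d 1 n := by
  unfold phi
  have h1 : (1 + n).choose n = n + 1 := by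
    rw [show 1 + n = n + 1 by omega, Nat.choose_succ_self_right]
  have h2 := key n hn d hd
  have hsub : d - 2 * 1 = d - 2 := by omega
  rw [hsub, h1]
  have : ((d - 2 + n).choose n : ℤ) + n * (n + 1) < ((d + n).choose n : ℤ) := by
    exact_mod_cast h2
  push_cast
  nlinarith
end

section
/- Let φ(d,e,n) := C(d+n, n) − C(d−2e+n, n) − (n+1)·C(e+n, n) + (n+1), regarded as an integer. Then for all integers d ≥ 5 and n ≥ 2, one has φ(d,2,n) > 0. -/
lemma choose2_eq (m : ℕ) : (m + 4).choose 2 * 2 = (m + 3) * (m + 4) := by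
  have h := Nat.choose_mul_factorial_mul_factorial (show 2 ≤ m + 4 by omega)
  have h2 : m + 4 - 2 = m + 2 := by omega
  rw [h2] at h
  have hfac : Nat.factorial (m + 4) = (m + 3) * (m + 4) * Nat.factorial (m + 2) := by
    rw [show m + 4 = (m + 3) + 1 from rfl, Nat.factorial_succ,
      show m + 3 = (m + 2) + 1 from rfl, Nat.factorial_succ]
    ring
  have hpos : 0 < Nat.factorial (m + 2) := Nat.factorial_pos _
  apply Nat.eq_of_mul_eq_mul_right hpos
  have : (m + 4).choose 2 * Nat.factorial 2 * Nat.factorial (m + 2) = (m + 3) * (m + 4) * Nat.factorial (m + 2) := by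
    rw [h, hfac]
  simpa [Nat.factorial] using this

lemma choose5_eq (m : ℕ) :
    (m + 7).choose 5 * 120 = (m + 3) * (m + 4) * (m + 5) * (m + 6) * (m + 7) := by
  have h := Nat.choose_mul_factorial_mul_factorial (show 5 ≤ m + 7 by omega)
  have h2 : m + 7 - 5 = m + 2 := by omega
  rw [h2] at h
  have hfac : Nat.factorial (m + 7) = (m + 3) * (m + 4) * (m + 5) * (m + 6) * (m + 7) * Nat.factorial (m + 2) := by
    rw [show m + 7 = (m + 6) + 1 from rfl, Nat.factorial_succ,
      show m + 6 = (m + 5) + 1 from rfl, Nat.factorial_succ,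
      show m + 5 = (m + 4) + 1 from rfl, Nat.factorial_succ,
      show m + 4 = (m + 3) + 1 from rfl, Nat.factorial_succ,
      show m + 3 = (m + 2) + 1 from rfl, Nat.factorial_succ]
    ring
  have hpos : 0 < Nat.factorial (m + 2) := Nat.factorial_pos _
  apply Nat.eq_of_mul_eq_mul_right hpos
  have : (m + 7).choose 5 * Nat.factorial 5 * Nat.factorial (m + 2) =
      (m + 3) * (m + 4) * (m + 5) * (m + 6) * (m + 7) * Nat.factorial (m + 2) := by
    rw [h, hfac]
  simpa [Nat.factorial] using this

lemma base_ineq (m : ℕ) :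
    (m + 3) * ((m + 4).choose 2) + 1 ≤ (m + 7).choose 5 := by
  have h2 := choose2_eq m
  have h5 := choose5_eq m
  have key : ((m + 3) * ((m + 4).choose 2) + 1) * 120 ≤ (m + 7).choose 5 * 120 := by
    have lhs : ((m + 3) * ((m + 4).choose 2) + 1) * 120
        = 60 * ((m + 3) * ((m + 3) * (m + 4))) + 120 := by
      rw [show ((m + 3) * ((m + 4).choose 2) + 1) * 120
          = (m + 3) * ((m + 4).choose 2 * 2) * 60 + 120 by ring, h2]
      ring
    rw [lhs, h5]
    have s1 : 60 * (m + 3) + 30 ≤ (m + 5) * ((m + 6) * (m + 7)) := by nlinarith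
    have s2 : (m + 3) * (m + 4) * (60 * (m + 3) + 30)
        ≤ (m + 3) * (m + 4) * ((m + 5) * ((m + 6) * (m + 7))) :=
      Nat.mul_le_mul_left _ s1
    have s3 : 12 ≤ (m + 3) * (m + 4) := by nlinarith
    calc 60 * ((m + 3) * ((m + 3) * (m + 4))) + 120
        ≤ (m + 3) * (m + 4) * (60 * (m + 3) + 30) := by nlinarith
      _ ≤ (m + 3) * (m + 4) * ((m + 5) * ((m + 6) * (m + 7))) := s2
      _ = (m + 3) * (m + 4) * (m + 5) * (m + 6) * (m + 7) := by ring
  exact Nat.le_of_mul_le_mul_right key (by norm_num)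

lemma main_nat (k m : ℕ) :
    (k + m + 3).choose (m + 2) + (m + 3) * ((m + 4).choose (m + 2)) + 1 ≤
      (k + m + 7).choose (m + 2) + m + 3 := by
  have hsymm : (m + 4).choose (m + 2) = (m + 4).choose 2 := by
    have := Nat.choose_symm (show 2 ≤ m + 4 by omega)
    simpa [show m + 4 - 2 = m + 2 by omega] using this
  rw [hsymm]
  induction k with
  | zero =>
      have h1 : (m + 3).choose (m + 2) = m + 3 := by
        simpa using Nat.choose_succ_self_right (m + 2)
      have h2 : (m + 7).choose (m + 2) = (m + 7).choose 5 := by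
        have := Nat.choose_symm (show 5 ≤ m + 7 by omega)
        simpa [show m + 7 - 5 = m + 2 by omega] using this
      simp only [Nat.zero_add, h1, h2]
      have := base_ineq m
      omega
  | succ k ih =>
      have p1 : (k + 1 + m + 7).choose (m + 2) =
          (k + m + 7).choose (m + 1) + (k + m + 7).choose (m + 2) := by
        rw [show k + 1 + m + 7 = (k + m + 7) + 1 by ring,
          show m + 2 = (m + 1) + 1 from rfl]
        exact Nat.choose_succ_succ _ _
      have p2 : (k + 1 + m + 3).choose (m + 2) =
          (k + m + 3).choose (m + 1) + (k + m + 3).choose (m + 2) := by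
        rw [show k + 1 + m + 3 = (k + m + 3) + 1 by ring,
          show m + 2 = (m + 1) + 1 from rfl]
        exact Nat.choose_succ_succ _ _
      have mono : (k + m + 3).choose (m + 1) ≤ (k + m + 7).choose (m + 1) :=
        Nat.choose_le_choose _ (by omega)
      omega

theorem stmt_5 (d n : ℕ) (hd : 5 ≤ d) (hn : 2 ≤ n) : 0 < phi d 2 n := by
  obtain ⟨k, rfl⟩ := Nat.exists_eq_add_of_le hd
  obtain ⟨m, rfl⟩ := Nat.exists_eq_add_of_le hn
  have h := main_nat k m
  unfold phi
  have e1 : 5 + k + (2 + m) = k + m + 7 := by ring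
  have e2 : 5 + k - 2 * 2 + (2 + m) = k + m + 3 := by omega
  have e3 : 2 + (2 + m) = m + 4 := by ring
  have e4 : 2 + m = m + 2 := by ring
  rw [e1, e2, e3, e4]
  push_cast
  push_cast at h
  linarith
end

section
/- Let φ(d,e,n) := C(d+n, n) − C(d−2e+n, n) − (n+1)·C(e+n, n) + (n+1), regarded as an integer. Then for all integers e ≥ 1, n ≥ 2 and d ≥ 2e, one has φ(d,e,n) < 0 if and only if either (e = 1 and d = 2), or (e = 2, d = 4 and 2 ≤ n ≤ 4). -/
private lemma dF_ind (a b n0 : ℕ)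
    (hbase : (n0 + 1) * (a + n0).descFactorial n0 ≤ (b + n0).descFactorial n0)
    (hstep : ∀ n, n0 ≤ n → (n + 2) * (a + (n + 1)) ≤ (n + 1) * (b + (n + 1))) :
    ∀ n, n0 ≤ n → (n + 1) * (a + n).descFactorial n ≤ (b + n).descFactorial n := by
  intro n hn
  induction n, hn using Nat.le_induction with
  | base => exact hbase
  | succ n hn ih =>
    have h1 : (a + (n + 1)).descFactorial (n + 1) = (a + (n + 1)) * (a + n).descFactorial n := by
      have h : a + (n + 1) = (a + n) + 1 := by ring
      rw [h, Nat.succ_descFactorial_succ]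
    have h2 : (b + (n + 1)).descFactorial (n + 1) = (b + (n + 1)) * (b + n).descFactorial n := by
      have h : b + (n + 1) = (b + n) + 1 := by ring
      rw [h, Nat.succ_descFactorial_succ]
    rw [h1, h2]
    calc (n + 1 + 1) * ((a + (n + 1)) * (a + n).descFactorial n)
        = (n + 2) * (a + (n + 1)) * (a + n).descFactorial n := by ring
      _ ≤ (n + 1) * (b + (n + 1)) * (a + n).descFactorial n :=
          Nat.mul_le_mul_right _ (hstep n hn)
      _ = (b + (n + 1)) * ((n + 1) * (a + n).descFactorial n) := by ring
      _ ≤ (b + (n + 1)) * (b + n).descFactorial n := Nat.mul_le_mul_left _ ih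

private lemma choose_of_dF {a b n : ℕ}
    (h : (n + 1) * (a + n).descFactorial n ≤ (b + n).descFactorial n) :
    (n + 1) * (a + n).choose n ≤ (b + n).choose n := by
  rw [Nat.descFactorial_eq_factorial_mul_choose, Nat.descFactorial_eq_factorial_mul_choose] at h
  have hf : 0 < Nat.factorial n := Nat.factorial_pos n
  apply Nat.le_of_mul_le_mul_left _ hf
  calc Nat.factorial n * ((n + 1) * (a + n).choose n)
      = (n + 1) * (Nat.factorial n * (a + n).choose n) := by ring
    _ ≤ Nat.factorial n * (b + n).choose n := h

private lemma phi_mono (e n : ℕ) (hn : 1 ≤ n) {d1 d2 : ℕ} (h1 : 2 * e ≤ d1) (h12 : d1 ≤ d2) :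
    phi d1 e n ≤ phi d2 e n := by
  induction d2, h12 using Nat.le_induction with
  | base => exact le_refl _
  | succ d hd ih =>
    refine le_trans ih ?_
    obtain ⟨k, rfl⟩ : ∃ k, n = k + 1 := ⟨n - 1, (Nat.succ_pred_eq_of_pos hn).symm⟩
    have h2e : 2 * e ≤ d := le_trans h1 hd
    have e1 : d + 1 + (k + 1) = (d + (k + 1)) + 1 := by ring
    have e2 : d + 1 - 2 * e + (k + 1) = (d - 2 * e + (k + 1)) + 1 := by omega
    have p1 : (d + 1 + (k + 1)).choose (k + 1)
        = (d + (k + 1)).choose k + (d + (k + 1)).choose (k + 1) := by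
      rw [e1, Nat.choose_succ_succ']
    have p2 : (d + 1 - 2 * e + (k + 1)).choose (k + 1)
        = (d - 2 * e + (k + 1)).choose k + (d - 2 * e + (k + 1)).choose (k + 1) := by
      rw [e2, Nat.choose_succ_succ']
    have hle : (d - 2 * e + (k + 1)).choose k ≤ (d + (k + 1)).choose k :=
      Nat.choose_le_choose k (by omega)
    simp only [phi, p1, p2]
    push_cast
    linarith [Int.ofNat_le.mpr hle]

theorem stmt_6 (d e n : ℕ) (he : 1 ≤ e) (hn : 2 ≤ n) (hd : 2 * e ≤ d) :
    phi d e n < 0 ↔ (e = 1 ∧ d = 2) ∨ (e = 2 ∧ d = 4 ∧ 2 ≤ n ∧ n ≤ 4) := by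
  have hn1 : 1 ≤ n := by omega
  have c1n : ∀ m : ℕ, (1 + m).choose m = m + 1 := by
    intro m
    have := Nat.choose_symm (n := m + 1) (k := 1) (by omega)
    simpa [Nat.add_comm, Nat.choose_one_right] using this.symm
  have cnn : (n).choose n = 1 := Nat.choose_self n
  constructor
  · intro hneg
    by_contra hcon
    push_neg at hcon
    have hge : 0 ≤ phi d e n := by
      rcases Nat.lt_or_ge e 3 with he3 | he3
      · interval_cases e
        · -- e = 1
          rcases Nat.lt_or_ge d 3 with hd3 | hd3
          · exfalso
            have hd2 : d = 2 := by omega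
            exact hcon.1 rfl hd2
          · have key : (n + 1) * (1 + n).choose n ≤ (3 + n).choose n := by
              apply choose_of_dF
              apply dF_ind 1 3 2 (by decide) _ n hn
              intro m hm; nlinarith
            have hb : 0 ≤ phi 3 1 n := by
              simp only [phi]
              have h31 : (3 : ℕ) - 2 * 1 + n = 1 + n := by norm_num
              rw [h31, c1n n]
              rw [c1n n] at key
              push_cast at key ⊢
              nlinarith [key]
            calc (0:ℤ) ≤ phi 3 1 n := hb
              _ ≤ phi d 1 n := phi_mono 1 n hn1 (by norm_num) hd3
        · -- e = 2
          rcases Nat.lt_or_ge d 5 with hd5 | hd5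
          · have hd4 : d = 4 := by omega
            subst hd4
            have hn5 : 5 ≤ n := by
              have := hcon.2 rfl rfl hn
              omega
            have key : (n + 1) * (2 + n).choose n ≤ (4 + n).choose n := by
              apply choose_of_dF
              apply dF_ind 2 4 5 (by decide) _ n hn5
              intro m hm; nlinarith
            simp only [phi]
            have h42 : (4 : ℕ) - 2 * 2 + n = n := by norm_num
            rw [h42, cnn]
            push_cast at key ⊢
            nlinarith [key]
          · have key : (n + 1) * (2 + n).choose n ≤ (5 + n).choose n := by
              apply choose_of_dF
              apply dF_ind 2 5 2 (by decide) _ n hn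
              intro m hm; nlinarith
            have hb : 0 ≤ phi 5 2 n := by
              simp only [phi]
              have h52 : (5 : ℕ) - 2 * 2 + n = 1 + n := by norm_num
              rw [h52, c1n n]
              push_cast at key ⊢
              nlinarith [key]
            calc (0:ℤ) ≤ phi 5 2 n := hb
              _ ≤ phi d 2 n := phi_mono 2 n hn1 (by norm_num) hd5
      · -- e ≥ 3
        have hb : 0 ≤ phi (2 * e) e n := by
          rcases eq_or_ne (e, n) (3, 2) with hsp | hsp
          · rw [Prod.mk.injEq] at hsp
            rw [hsp.1, hsp.2]
            norm_num [phi, Nat.choose]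
          · have key : (n + 1) * (e + n).choose n ≤ (2 * e + n).choose n := by
              apply choose_of_dF
              rcases Nat.lt_or_ge e 4 with he4 | he4
              · have he3' : e = 3 := by omega
                subst he3'
                have hn3 : 3 ≤ n := by
                  rcases Nat.lt_or_ge n 3 with h | h
                  · exfalso; apply hsp; rw [Prod.mk.injEq]; omega
                  · exact h
                have := dF_ind 3 6 3 (by decide) (fun m hm => by nlinarith) n hn3
                simpa using this
              · apply dF_ind e (2 * e) 2 _ _ n hn
                · have hd2 : (e + 2).descFactorial 2 = (e + 2) * (e + 1) := by
                    have h : e + 2 = (e + 1) + 1 := rfl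
                    rw [h, Nat.succ_descFactorial_succ, Nat.descFactorial_one]
                  have hd2' : (2 * e + 2).descFactorial 2 = (2 * e + 2) * (2 * e + 1) := by
                    have h : 2 * e + 2 = (2 * e + 1) + 1 := rfl
                    rw [h, Nat.succ_descFactorial_succ, Nat.descFactorial_one]
                  rw [hd2, hd2']
                  nlinarith
                · intro m hm; nlinarith
            simp only [phi]
            have h2e : 2 * e - 2 * e + n = n := by omega
            rw [h2e, cnn]
            push_cast at key ⊢
            nlinarith [key]
        calc (0:ℤ) ≤ phi (2 * e) e n := hb
          _ ≤ phi d e n := phi_mono e n hn1 (le_refl _) hd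
    linarith
  · rintro (⟨he1, hd2⟩ | ⟨he2, hd4, hn2, hn4⟩)
    · subst he1; subst hd2
      simp only [phi]
      have h21 : (2 : ℕ) - 2 * 1 + n = n := by norm_num
      rw [h21, cnn, c1n n]
      have hsym : (2 + n).choose n = (2 + n).choose 2 := by
        have := Nat.choose_symm (n := 2 + n) (k := 2) (by omega)
        simpa using this
      have hdf : (2 + n).descFactorial 2 = (2 + n) * (1 + n) := by
        have h : 2 + n = (1 + n) + 1 := by ring
        rw [h, Nat.succ_descFactorial_succ, Nat.descFactorial_one]
      have c2 : Nat.factorial 2 * (2 + n).choose 2 = (2 + n) * (1 + n) := by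
        rw [← Nat.descFactorial_eq_factorial_mul_choose, hdf]
      rw [hsym]
      have h2c : 2 * ((2 + n).choose 2) = (2 + n) * (1 + n) := by
        rw [← c2]; norm_num [Nat.factorial]
      have h2c' : (2 : ℤ) * ((2 + n).choose 2 : ℤ) = ((2 + n : ℕ) : ℤ) * ((1 + n : ℕ) : ℤ) := by
        exact_mod_cast congrArg (Nat.cast : ℕ → ℤ) h2c
      push_cast at h2c' ⊢
      nlinarith [h2c', hn]
    · subst he2; subst hd4
      interval_cases n <;> norm_num [phi, Nat.choose]
end

section
/- For all integers d ≥ 3, n ≥ 2 and s with 1 ≤ s ≤ n−1, one has (n+1)(s+1) < C(d+s, s) + C(d−1+s, s)·(n−s). -/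
lemma two_choose (s : ℕ) : 2 * (s + 2).choose 2 = (s + 1) * (s + 2) := by
  induction s with
  | zero => rfl
  | succ k ih =>
    have : (k + 3).choose 2 = (k + 2).choose 1 + (k + 2).choose 2 :=
      Nat.choose_succ_succ (k + 2) 1
    simp [Nat.choose_one_right] at this
    rw [show k + 1 + 2 = k + 3 by ring, this]
    ring_nf
    ring_nf at ih
    omega

lemma three_choose (s : ℕ) : 6 * (s + 3).choose 3 = (s + 1) * (s + 2) * (s + 3) := by
  induction s with
  | zero => rfl
  | succ k ih =>
    have h : (k + 4).choose 3 = (k + 3).choose 2 + (k + 3).choose 3 :=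
      Nat.choose_succ_succ (k + 3) 2
    have h2 := two_choose (k + 1)
    rw [show k + 1 + 3 = k + 4 by ring, h]
    rw [show k + 1 + 2 = k + 3 by ring] at h2
    nlinarith [ih, h2]

theorem stmt_8 (d n s : ℕ) (hd : 3 ≤ d) (hn : 2 ≤ n) (hs1 : 1 ≤ s) (hs2 : s ≤ n - 1) :
    (n + 1) * (s + 1) < (d + s).choose s + (d - 1 + s).choose s * (n - s) := by
  obtain ⟨t, ht, rfl⟩ : ∃ t, 1 ≤ t ∧ n = s + t := ⟨n - s, by omega, by omega⟩
  have h1 : (s + 3).choose s ≤ (d + s).choose s := Nat.choose_le_choose s (by omega)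
  have h2 : (s + 2).choose s ≤ (d - 1 + s).choose s := Nat.choose_le_choose s (by omega)
  have e1 : (s + 3).choose s = (s + 3).choose 3 := by
    rw [← Nat.choose_symm (by omega : 3 ≤ s + 3)]; norm_num
  have e2 : (s + 2).choose s = (s + 2).choose 2 := by
    rw [← Nat.choose_symm (by omega : 2 ≤ s + 2)]; norm_num
  have h3 := three_choose s
  have h4 := two_choose s
  have hst : s + t - s = t := by omega
  rw [hst]
  have hst2 : s ≤ s * t := Nat.le_mul_of_pos_right s ht
  have h5 : 6 * ((s + 2).choose 2 * t) = 3 * ((s + 1) * (s + 2) * t) := by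
    rw [show 3 * ((s + 1) * (s + 2) * t) = 3 * ((2 * (s + 2).choose 2) * t) by rw [h4]]
    ring
  have poly : 6 * ((s + t + 1) * (s + 1)) < (s + 1) * (s + 2) * (s + 3) + 3 * ((s + 1) * (s + 2) * t) := by
    nlinarith [hst2, hs1, ht]
  have key : (s + t + 1) * (s + 1) < (s + 3).choose 3 + (s + 2).choose 2 * t := by
    linarith [h3, h5, poly]
  calc (s + t + 1) * (s + 1) < (s + 3).choose 3 + (s + 2).choose 2 * t := key
    _ = (s + 3).choose s + (s + 2).choose s * t := by rw [e1, e2]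
    _ ≤ (d + s).choose s + (d - 1 + s).choose s * t := by
        exact Nat.add_le_add h1 (Nat.mul_le_mul_right t h2)
end

section
/- For all integers d ≥ 3 and n ≥ 2, the two conditions (2−d)n² + 4n + 1 > 0 and C(d+n, n) − 1 − ((d−1)n² + 2) ≥ 0 hold simultaneously if and only if (d,n) ∈ {(4,2), (3,4)}. -/
theorem stmt_10 (d n : ℕ) (hd : 3 ≤ d) (hn : 2 ≤ n) :
    ((2 - (d : ℤ)) * (n : ℤ) ^ 2 + 4 * (n : ℤ) + 1 > 0 ∧
      0 ≤ ((d + n).choose n : ℤ) - 1 - (((d : ℤ) - 1) * (n : ℤ) ^ 2 + 2)) ↔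
    (d = 4 ∧ n = 2) ∨ (d = 3 ∧ n = 4) := by
  constructor
  · rintro ⟨h1, h2⟩
    have hdz : (3 : ℤ) ≤ (d : ℤ) := by exact_mod_cast hd
    have hnz : (2 : ℤ) ≤ (n : ℤ) := by exact_mod_cast hn
    have hd4 : d ≤ 4 := by
      by_contra h
      push_neg at h
      have : (5 : ℤ) ≤ (d : ℤ) := by exact_mod_cast h
      nlinarith
    have hn4 : n ≤ 4 := by
      by_contra h
      push_neg at h
      have : (5 : ℤ) ≤ (n : ℤ) := by exact_mod_cast h
      nlinarith
    interval_cases d <;> interval_cases n <;>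
      first
        | exact Or.inl ⟨rfl, rfl⟩
        | exact Or.inr ⟨rfl, rfl⟩
        | (exfalso; revert h1 h2; decide)
  · rintro (⟨rfl, rfl⟩ | ⟨rfl, rfl⟩) <;> norm_num [Nat.choose]
end

section
/- For all integers m ≥ 1 and d ≥ m, one has 2·C(m+2, 3) > Σ_{i=0}^{m−1} (d+1−i)(i+1) (sum taken in the integers) if and only if 3d < 4m − 1. Equivalently, 6·(2·C(m+2, 3) − Σ_{i=0}^{m−1} (d+1−i)(i+1)) = m(4m² + 3m − 1 − 3d − 3md). -/
open Finset

/-! Both sides are cubic polynomials in `m`: with `6·C(m+2,3) = m(m+1)(m+2)` and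
`6·Σ_{i<m} (d+1-i)(i+1) = m(m+1)(3d+5-2m)`, six times the difference factors as
`m(m+1)(4m-1-3d)`, whose sign for `m ≥ 1` is that of `4m-1-3d`. -/

theorem six_mul_choose_three (m : ℕ) :
    6 * ((m + 2).choose 3 : ℤ) = m * (m + 1) * (m + 2) := by
  have h := Nat.descFactorial_eq_factorial_mul_choose (m + 2) 3
  simp only [Nat.descFactorial, add_tsub_cancel_right, Nat.add_one_sub_one, tsub_zero, mul_one,
    Nat.factorial, Nat.succ_eq_add_one, Nat.reduceAdd, zero_add, Nat.reduceMul] at h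
  rw [← mul_assoc] at h
  exact_mod_cast h.symm

theorem six_mul_sum_range_mul_succ (m : ℕ) (d : ℤ) :
    6 * ∑ i ∈ range m, (d + 1 - i) * (i + 1) = m * (m + 1) * (3 * d + 5 - 2 * m) := by
  induction m with
  | zero => simp
  | succ n ih =>
    rw [sum_range_succ, mul_add, ih]
    push_cast
    ring

theorem six_mul_special_inequality_eq (m : ℕ) (d : ℤ) :
    6 * (2 * ((m + 2).choose 3 : ℤ) - ∑ i ∈ range m, (d + 1 - i) * (i + 1)) =
      m * (m + 1) * (4 * m - 1 - 3 * d) := by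
  linear_combination 2 * six_mul_choose_three m - six_mul_sum_range_mul_succ m d

theorem mul_succ_mul_pos_iff (m d : ℕ) :
    0 < (m : ℤ) * (m + 1) * (4 * m - 1 - 3 * d) ↔ 3 * (d : ℤ) < 4 * m - 1 := by
  rcases m.eq_zero_or_pos with rfl | hm
  · simp only [Nat.cast_zero, zero_mul, lt_self_iff_false, false_iff, not_lt]
    omega
  · rw [mul_pos_iff_of_pos_left (by positivity), sub_pos]

theorem stmt_11_general (m d : ℕ) :
    (2 * ((m + 2).choose 3 : ℤ) > ∑ i ∈ Finset.range m, ((d : ℤ) + 1 - i) * (i + 1) ↔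
      3 * (d : ℤ) < 4 * (m : ℤ) - 1) ∧
    6 * (2 * ((m + 2).choose 3 : ℤ) - ∑ i ∈ Finset.range m, ((d : ℤ) + 1 - i) * (i + 1)) =
      (m : ℤ) * (4 * (m : ℤ) ^ 2 + 3 * (m : ℤ) - 1 - 3 * (d : ℤ) - 3 * (m : ℤ) * (d : ℤ)) := by
  have key := six_mul_special_inequality_eq m d
  refine ⟨?_, by rw [key]; ring⟩
  rw [gt_iff_lt, ← sub_pos, ← mul_succ_mul_pos_iff, ← key]
  exact (mul_pos_iff_of_pos_left (by norm_num)).symm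

theorem stmt_11 (m d : ℕ) (hm : 1 ≤ m) (hd : m ≤ d) :
    (2 * ((m + 2).choose 3 : ℤ) > ∑ i ∈ Finset.range m, ((d : ℤ) + 1 - i) * (i + 1) ↔
      3 * (d : ℤ) < 4 * (m : ℤ) - 1) ∧
    6 * (2 * ((m + 2).choose 3 : ℤ) - ∑ i ∈ Finset.range m, ((d : ℤ) + 1 - i) * (i + 1)) =
      (m : ℤ) * (4 * (m : ℤ) ^ 2 + 3 * (m : ℤ) - 1 - 3 * (d : ℤ) - 3 * (m : ℤ) * (d : ℤ)) :=
  stmt_11_general m d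
end

section
/- For all positive integers r, s, t, one has ∏_{i=1}^{t} (r+s+i) ≥ ( ∏_{j=1}^{t−1} (s+j) ) · (s + t + r·t). -/
/-! Induction on `t`. Going from `t` to `t + 1` multiplies the left side by
`(s + t)(s + t + 1 + r(t + 1)) / (s + t + r t)` and the right side by `r + s + t + 1`; after
cross-multiplying, the two factors differ by exactly `r t (r + 1) ≥ 0`. -/

open Finset

lemma add_mul_add_le_add_mul_add (r s t : ℕ) :
    (s + t) * (s + (t + 1) + r * (t + 1)) ≤ (s + t + r * t) * (r + s + (t + 1)) := by
  have h : (s + t + r * t) * (r + s + (t + 1)) =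
      (s + t) * (s + (t + 1) + r * (t + 1)) + r * t * (r + 1) := by ring
  omega

lemma prod_Icc_add_mul_le_prod_Icc_add (r s n : ℕ) :
    (∏ j ∈ Icc 1 n, (s + j)) * (s + (n + 1) + r * (n + 1)) ≤
      ∏ i ∈ Icc 1 (n + 1), (r + s + i) := by
  induction n with
  | zero => simp only [zero_add, Icc_self, prod_singleton, Icc_eq_empty_of_lt one_pos, prod_empty]; omega
  | succ n ih =>
    set P := ∏ j ∈ Icc 1 n, (s + j)
    rw [prod_Icc_succ_top (by omega), prod_Icc_succ_top (by omega)]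
    calc P * (s + (n + 1)) * (s + (n + 1 + 1) + r * (n + 1 + 1))
        = P * ((s + (n + 1)) * (s + (n + 1 + 1) + r * (n + 1 + 1))) := by ring
      _ ≤ P * ((s + (n + 1) + r * (n + 1)) * (r + s + (n + 1 + 1))) :=
          Nat.mul_le_mul_left _ (add_mul_add_le_add_mul_add r s (n + 1))
      _ = P * (s + (n + 1) + r * (n + 1)) * (r + s + (n + 1 + 1)) := by ring
      _ ≤ (∏ i ∈ Icc 1 (n + 1), (r + s + i)) * (r + s + (n + 1 + 1)) :=
          Nat.mul_le_mul_right _ ih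

theorem stmt_14_general (r s t : ℕ) (ht : 1 ≤ t) :
    (∏ j ∈ Finset.Icc 1 (t - 1), (s + j)) * (s + t + r * t) ≤
      ∏ i ∈ Finset.Icc 1 t, (r + s + i) := by
  obtain ⟨n, rfl⟩ : ∃ n, t = n + 1 := ⟨t - 1, by omega⟩
  exact prod_Icc_add_mul_le_prod_Icc_add r s n

theorem stmt_14 (r s t : ℕ) (hr : 1 ≤ r) (hs : 1 ≤ s) (ht : 1 ≤ t) :
    (∏ j ∈ Finset.Icc 1 (t - 1), (s + j)) * (s + t + r * t) ≤
      ∏ i ∈ Finset.Icc 1 t, (r + s + i) :=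
  stmt_14_general r s t ht
end

section
/- Define, for positive integers e₁, e₂, n₁, n₂, the integer η(e₁,e₂,n₁,n₂) := C(2e₁+n₁, n₁)·C(2e₂+n₂, n₂) − (C(e₁+n₁, n₁)·C(e₂+n₂, n₂) − 1)·(n₁+n₂+1) − 1. Then for all e₁, e₂ ≥ 2 and n₁, n₂ ≥ 2, one has η(e₁,e₂,n₁+1,n₂) ≥ η(e₁,e₂,n₁,n₂) and η(e₁,e₂,n₁,n₂+1) ≥ η(e₁,e₂,n₁,n₂); that is, η is non-decreasing in n₁ and in n₂. -/
/-- η(e₁,e₂,n₁,n₂) = C(2e₁+n₁,n₁)·C(2e₂+n₂,n₂)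
    − (C(e₁+n₁,n₁)·C(e₂+n₂,n₂) − 1)·(n₁+n₂+1) − 1, as an integer. -/
def eta (e₁ e₂ n₁ n₂ : ℕ) : ℤ :=
  ((2 * e₁ + n₁).choose n₁ : ℤ) * ((2 * e₂ + n₂).choose n₂ : ℤ)
    - (((e₁ + n₁).choose n₁ : ℤ) * ((e₂ + n₂).choose n₂ : ℤ) - 1) * ((n₁ : ℤ) + n₂ + 1) - 1


lemma key_choose (n : ℕ) : ∀ e : ℕ, 1 ≤ e → (n+2) * (e+n).choose n ≤ 2 * (2*e+n).choose n := by
  intro e he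
  induction e, he using Nat.le_induction with
  | base =>
      have h := Nat.choose_mul_succ_eq (1+n) n
      rw [show 1+n+1-n = 2 by omega] at h
      rw [show 2*1+n = 1+n+1 by omega, show (1:ℕ)+n = n+1 by omega]
      rw [show (1:ℕ)+n = n+1 by omega] at h
      calc (n+2) * (n+1).choose n = (n+1).choose n * (n+1+1) := by ring
        _ = (n+1+1).choose n * 2 := h
        _ = 2 * (n+1+1).choose n := by ring
        _ ≤ 2 * (n+1+1).choose n := le_rfl
  | succ e he ih =>
      have I1 : (e+n).choose n * (e+n+1) = (e+n+1).choose n * (e+1) := by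
        have h := Nat.choose_mul_succ_eq (e+n) n
        rwa [show e+n+1-n = e+1 by omega] at h
      have I2 : (2*e+n).choose n * (2*e+n+1) = (2*e+n+1).choose n * (2*e+1) := by
        have h := Nat.choose_mul_succ_eq (2*e+n) n
        rwa [show 2*e+n+1-n = 2*e+1 by omega] at h
      have I3 : (2*e+n+1).choose n * (2*e+n+2) = (2*e+n+2).choose n * (2*e+2) := by
        have h := Nat.choose_mul_succ_eq (2*e+n+1) n
        rwa [show 2*e+n+1+1-n = 2*e+2 by omega, show 2*e+n+1+1 = 2*e+n+2 by omega] at h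
      rw [show e+1+n = e+n+1 by omega, show 2*(e+1)+n = 2*e+n+2 by omega]
      have hc : 0 < (e+1)*((2*e+1)*(2*e+2)) := by positivity
      apply Nat.le_of_mul_le_mul_right _ hc
      zify at I1 I2 I3 ih ⊢
      have hK0 : (0:ℤ) ≤ ((2*e+n).choose n : ℤ) := by positivity
      have hpoly : ((e:ℤ)+n+1)*((2*e+1)*(2*e+2)) ≤ (2*(e:ℤ)+n+1)*(2*e+n+2)*(e+1) := by
        nlinarith [sq_nonneg (n:ℤ)]
      calc ((n:ℤ)+2) * ((e+n+1).choose n : ℤ) * ((e+1)*((2*e+1)*(2*e+2)))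
          = ((n:ℤ)+2) * ((e+n).choose n : ℤ) * ((e+n+1)*((2*e+1)*(2*e+2))) := by
            linear_combination (-((n:ℤ)+2)*((2*e+1)*(2*e+2))) * I1
        _ ≤ 2 * ((2*e+n).choose n : ℤ) * ((e+n+1)*((2*e+1)*(2*e+2))) := by
            have := mul_le_mul_of_nonneg_right ih (by positivity : (0:ℤ) ≤ (e+n+1)*((2*e+1)*(2*e+2)))
            linarith
        _ ≤ 2 * ((2*e+n).choose n : ℤ) * ((2*(e:ℤ)+n+1)*(2*e+n+2)*(e+1)) := by
            have := mul_le_mul_of_nonneg_left hpoly (by positivity : (0:ℤ) ≤ 2 * ((2*e+n).choose n : ℤ))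
            linarith [this]
        _ = 2 * ((2*e+n+2).choose n : ℤ) * ((e+1)*((2*e+1)*(2*e+2))) := by
            linear_combination (2*((e:ℤ)+1)*(2*e+n+2)) * I2 + (2*((e:ℤ)+1)*(2*e+1)) * I3

lemma eta_swap (e₁ e₂ n₁ n₂ : ℕ) : eta e₁ e₂ n₁ n₂ = eta e₂ e₁ n₂ n₁ := by
  unfold eta; ring

lemma abstract_step (A D a d B b e₁ n₁ n₂ : ℤ)
    (hDA : D*(n₁+1) = A*(2*e₁)) (hda : d*(n₁+1) = a*e₁)
    (k1 : (n₁+2)*a ≤ 2*A) (k2 : (n₂+2)*b ≤ 2*B)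
    (ha1 : 1 ≤ a) (hb1 : 1 ≤ b) (hA0 : 0 ≤ A) (hB0 : 0 ≤ B)
    (he1 : 2 ≤ e₁) (hn1 : 2 ≤ n₁) (hn2 : 2 ≤ n₂) :
    A*B - (a*b-1)*(n₁+n₂+1) - 1 ≤ (A+D)*B - ((a+d)*b-1)*((n₁+1)+n₂+1) - 1 := by
  have hsub : ((A+D)*B - ((a+d)*b-1)*((n₁+1)+n₂+1) - 1 - (A*B - (a*b-1)*(n₁+n₂+1) - 1)) * (n₁+1)
      = 2*e₁*A*B - e₁*a*b*(n₁+n₂+2) - (a*b-1)*(n₁+1) := by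
    linear_combination B*hDA - (b*(n₁+n₂+2))*hda
  have habz : (0:ℤ) ≤ a*b := mul_nonneg (by linarith) (by linarith)
  have h4 : ((n₁+2)*a)*((n₂+2)*b) ≤ (2*A)*(2*B) :=
    mul_le_mul k1 k2 (by nlinarith) (by linarith)
  have q1 : (0:ℤ) ≤ e₁*((2*A)*(2*B) - ((n₁+2)*a)*((n₂+2)*b)) :=
    mul_nonneg (by linarith) (by linarith)
  have h6 : 4*n₁ ≤ e₁*n₁*n₂ := by
    nlinarith [mul_nonneg (mul_nonneg (by linarith : (0:ℤ) ≤ e₁-2) (by linarith : (0:ℤ) ≤ n₁)) (by linarith : (0:ℤ) ≤ n₂),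
      mul_nonneg (by linarith : (0:ℤ) ≤ n₁) (by linarith : (0:ℤ) ≤ n₂-2)]
  have q2 : 2*(a*b-1)*(n₁+1) ≤ e₁*(a*b)*(n₁*n₂) := by
    nlinarith [mul_nonneg habz (by linarith : (0:ℤ) ≤ e₁*n₁*n₂ - 4*n₁),
      mul_nonneg habz (by linarith : (0:ℤ) ≤ n₁-1)]
  have hT : 0 ≤ 2*e₁*A*B - e₁*a*b*(n₁+n₂+2) - (a*b-1)*(n₁+1) := by
    linarith [q1, q2]
  have h := (mul_nonneg_iff_of_pos_right (show (0:ℤ) < n₁+1 by linarith)).mp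
    (by rw [hsub]; exact hT)
  linarith

lemma eta_mono₁ (e₁ e₂ n₁ n₂ : ℕ) (he₁ : 2 ≤ e₁) (he₂ : 2 ≤ e₂)
    (hn₁ : 2 ≤ n₁) (hn₂ : 2 ≤ n₂) : eta e₁ e₂ n₁ n₂ ≤ eta e₁ e₂ (n₁ + 1) n₂ := by
  have hDA : ((2*e₁+n₁).choose (n₁+1) : ℤ) * ((n₁:ℤ)+1) = ((2*e₁+n₁).choose n₁ : ℤ) * (2*e₁) := by
    have h := Nat.choose_succ_right_eq (2*e₁+n₁) n₁
    rw [show 2*e₁+n₁-n₁ = 2*e₁ by omega] at h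
    exact_mod_cast congrArg (Nat.cast : ℕ → ℤ) h
  have hda : ((e₁+n₁).choose (n₁+1) : ℤ) * ((n₁:ℤ)+1) = ((e₁+n₁).choose n₁ : ℤ) * (e₁:ℤ) := by
    have h := Nat.choose_succ_right_eq (e₁+n₁) n₁
    rw [show e₁+n₁-n₁ = e₁ by omega] at h
    exact_mod_cast congrArg (Nat.cast : ℕ → ℤ) h
  have k1 : ((n₁:ℤ)+2) * ((e₁+n₁).choose n₁ : ℤ) ≤ 2 * ((2*e₁+n₁).choose n₁ : ℤ) := by
    exact_mod_cast key_choose n₁ e₁ (by omega)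
  have k2 : ((n₂:ℤ)+2) * ((e₂+n₂).choose n₂ : ℤ) ≤ 2 * ((2*e₂+n₂).choose n₂ : ℤ) := by
    exact_mod_cast key_choose n₂ e₂ (by omega)
  have ha1 : (1:ℤ) ≤ ((e₁+n₁).choose n₁ : ℤ) := by
    exact_mod_cast Nat.succ_le_of_lt (Nat.choose_pos (by omega))
  have hb1 : (1:ℤ) ≤ ((e₂+n₂).choose n₂ : ℤ) := by
    exact_mod_cast Nat.succ_le_of_lt (Nat.choose_pos (by omega))
  have hA0 : (0:ℤ) ≤ ((2*e₁+n₁).choose n₁ : ℤ) := by positivity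
  have hB0 : (0:ℤ) ≤ ((2*e₂+n₂).choose n₂ : ℤ) := by positivity
  have habs := abstract_step ((2*e₁+n₁).choose n₁ : ℤ) ((2*e₁+n₁).choose (n₁+1) : ℤ)
    ((e₁+n₁).choose n₁ : ℤ) ((e₁+n₁).choose (n₁+1) : ℤ)
    ((2*e₂+n₂).choose n₂ : ℤ) ((e₂+n₂).choose n₂ : ℤ)
    (e₁:ℤ) (n₁:ℤ) (n₂:ℤ) hDA hda k1 k2 ha1 hb1 hA0 hB0
    (by exact_mod_cast he₁) (by exact_mod_cast hn₁) (by exact_mod_cast hn₂)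
  unfold eta
  rw [show 2*e₁+(n₁+1) = (2*e₁+n₁)+1 by omega, Nat.choose_succ_succ,
      show e₁+(n₁+1) = (e₁+n₁)+1 by omega, Nat.choose_succ_succ]
  push_cast
  linarith [habs]

theorem stmt_15 (e₁ e₂ n₁ n₂ : ℕ) (he₁ : 2 ≤ e₁) (he₂ : 2 ≤ e₂)
    (hn₁ : 2 ≤ n₁) (hn₂ : 2 ≤ n₂) :
    eta e₁ e₂ n₁ n₂ ≤ eta e₁ e₂ (n₁ + 1) n₂ ∧
    eta e₁ e₂ n₁ n₂ ≤ eta e₁ e₂ n₁ (n₂ + 1) := by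
  refine ⟨eta_mono₁ e₁ e₂ n₁ n₂ he₁ he₂ hn₁ hn₂, ?_⟩
  rw [eta_swap e₁ e₂ n₁ n₂, eta_swap e₁ e₂ n₁ (n₂+1)]
  exact eta_mono₁ e₂ e₁ n₂ n₁ he₂ he₁ hn₂ hn₁
end
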